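/- Let μ be an atomless (continuous) probability measure on ℝ and let θ < 0. For n ≥ 1 set p_n(θ) := μ^{⊗(n+1)}({x ∈ ℝ^{n+1} : x_{i+1} ≥ θ·x_i for all 1 ≤ i ≤ n}) and q_n(θ) := μ^{⊗(n+1)}({x ∈ ℝ^{n+1} : θ·x_i ≥ x_{i+1} for all 1 ≤ i ≤ n}), with p_0(θ) := q_0(θ) := 1. Then for every n ≥ 0 one has p_n(θ) = ∑_{k=1}^n (-1)^{k-1} · p_{n-k}(θ) · q_{k-1}(1/θ) + (-1)^n · q_n(1/θ). -/

import Mathlib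

open MeasureTheory Set

/-- Persistence probability `p_n(θ) = P(X_2 ≥ θX_1, …, X_{n+1} ≥ θX_n)` for
`X_1,…,X_{n+1}` i.i.d. with common law `μ`, with `p_0(θ) := 1`. -/
noncomputable def genPers (μ : Measure ℝ) (θ : ℝ) : ℕ → ℝ
  | 0 => 1
  | n + 1 =>
    ((Measure.pi fun _ : Fin (n + 2) => μ)
      {x : Fin (n + 2) → ℝ | ∀ i : Fin (n + 1), θ * x i.castSucc ≤ x i.succ}).toReal

/-- `q_n(θ) = P(θX_1 ≥ X_2, …, θX_n ≥ X_{n+1})` for `X_1,…,X_{n+1}` i.i.d. with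
common law `μ`, with `q_0(θ) := 1`. -/
noncomputable def genPersQ (μ : Measure ℝ) (θ : ℝ) : ℕ → ℝ
  | 0 => 1
  | n + 1 =>
    ((Measure.pi fun _ : Fin (n + 2) => μ)
      {x : Fin (n + 2) → ℝ | ∀ i : Fin (n + 1), x i.succ ≤ θ * x i.castSucc}).toReal

/-! ### Auxiliary definitions -/

/-- The "persistence" chain event with `c` constraints on `c+1` coordinates. -/
def pSet (θ : ℝ) (c : ℕ) : Set (Fin (c+1) → ℝ) := {z | ∀ i : Fin c, θ * z i.castSucc ≤ z i.succ}

/-- The "reverse persistence" chain event with `c` constraints on `c+1` coordinates. -/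
def qSet (θ : ℝ) (c : ℕ) : Set (Fin (c+1) → ℝ) := {z | ∀ i : Fin c, z i.succ ≤ θ * z i.castSucc}

/-- Event: all constraints with index `< j` are reversed. -/
def Cset (θ : ℝ) (N j : ℕ) : Set (Fin (N+1) → ℝ) :=
  {x | ∀ i : Fin N, (i:ℕ) < j → x i.succ ≤ θ * x i.castSucc}

/-- Event: all constraints with index `≥ j` hold. -/
def Dset (θ : ℝ) (N j : ℕ) : Set (Fin (N+1) → ℝ) :=
  {x | ∀ i : Fin N, j ≤ (i:ℕ) → θ * x i.castSucc ≤ x i.succ}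

/-! ### Measurability -/

lemma measurableSet_pSet (θ : ℝ) (c : ℕ) : MeasurableSet (pSet θ c) := by
  have : pSet θ c = ⋂ i : Fin c, {z : Fin (c+1) → ℝ | θ * z i.castSucc ≤ z i.succ} := by
    ext z; simp [pSet]
  rw [this]
  exact MeasurableSet.iInter fun i =>
    measurableSet_le (measurable_const.mul (measurable_pi_apply _)) (measurable_pi_apply _)

lemma measurableSet_qSet (θ : ℝ) (c : ℕ) : MeasurableSet (qSet θ c) := by
  have : qSet θ c = ⋂ i : Fin c, {z : Fin (c+1) → ℝ | z i.succ ≤ θ * z i.castSucc} := by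
    ext z; simp [qSet]
  rw [this]
  exact MeasurableSet.iInter fun i =>
    measurableSet_le (measurable_pi_apply _) (measurable_const.mul (measurable_pi_apply _))

lemma measurableSet_Cset (θ : ℝ) (N j : ℕ) : MeasurableSet (Cset θ N j) := by
  have : Cset θ N j = ⋂ i : Fin N, ⋂ (_ : (i:ℕ) < j),
      {x : Fin (N+1) → ℝ | x i.succ ≤ θ * x i.castSucc} := by ext x; simp [Cset]
  rw [this]
  exact MeasurableSet.iInter fun i => MeasurableSet.iInter fun _ =>
    measurableSet_le (measurable_pi_apply _) (measurable_const.mul (measurable_pi_apply _))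

lemma measurableSet_Dset (θ : ℝ) (N j : ℕ) : MeasurableSet (Dset θ N j) := by
  have : Dset θ N j = ⋂ i : Fin N, ⋂ (_ : j ≤ (i:ℕ)),
      {x : Fin (N+1) → ℝ | θ * x i.castSucc ≤ x i.succ} := by ext x; simp [Dset]
  rw [this]
  exact MeasurableSet.iInter fun i => MeasurableSet.iInter fun _ =>
    measurableSet_le (measurable_const.mul (measurable_pi_apply _)) (measurable_pi_apply _)

/-! ### `genPers`/`genPersQ` via `pSet`/`qSet` -/

lemma genPers_eq (μ : Measure ℝ) [IsProbabilityMeasure μ] (θ : ℝ) :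
    ∀ c : ℕ, genPers μ θ c = ((Measure.pi fun _ : Fin (c+1) => μ) (pSet θ c)).toReal
  | 0 => by
    have h : pSet θ 0 = univ := eq_univ_of_forall fun z i => i.elim0
    simp [genPers, h]
  | (c+1) => rfl

lemma genPersQ_eq (μ : Measure ℝ) [IsProbabilityMeasure μ] (θ : ℝ) :
    ∀ c : ℕ, genPersQ μ θ c = ((Measure.pi fun _ : Fin (c+1) => μ) (qSet θ c)).toReal
  | 0 => by
    have h : qSet θ 0 = univ := eq_univ_of_forall fun z i => i.elim0
    simp [genPersQ, h]
  | (c+1) => rfl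

/-! ### Measure-theoretic lemmas -/

lemma pi_comp_equiv {μ : Measure ℝ} [IsProbabilityMeasure μ] {ι : Type*} [Fintype ι]
    [DecidableEq ι] {m : ℕ} (e : ι ≃ Fin m) (S : Set (ι → ℝ)) (hS : MeasurableSet S) :
    (Measure.pi fun _ : Fin m => μ) ((fun x : Fin m → ℝ => fun i => x (e i)) ⁻¹' S)
      = (Measure.pi fun _ : ι => μ) S := by
  have hmp := measurePreserving_piCongrLeft (fun _ : Fin m => μ) e
  have hmeas : Measurable fun x : Fin m → ℝ => (fun i => x (e i)) :=
    measurable_pi_lambda _ fun i => measurable_pi_apply _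
  have key : (MeasurableEquiv.piCongrLeft (fun _ : Fin m => ℝ) e) ⁻¹'
      ((fun x : Fin m → ℝ => fun i => x (e i)) ⁻¹' S) = S := by
    ext y
    simp only [mem_preimage]
    have : (fun i => (MeasurableEquiv.piCongrLeft (fun _ : Fin m => ℝ) e) y (e i)) = y := by
      ext i; rw [MeasurableEquiv.piCongrLeft_apply_apply]
    rw [this]
  calc (Measure.pi fun _ : Fin m => μ) ((fun x : Fin m → ℝ => fun i => x (e i)) ⁻¹' S)
      = (Measure.pi fun _ : ι => μ)
          ((MeasurableEquiv.piCongrLeft (fun _ : Fin m => ℝ) e) ⁻¹'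
            ((fun x : Fin m → ℝ => fun i => x (e i)) ⁻¹' S)) :=
        (hmp.measure_preimage (hmeas hS).nullMeasurableSet).symm
    _ = (Measure.pi fun _ : ι => μ) S := by rw [key]

lemma pi_split {μ : Measure ℝ} [IsProbabilityMeasure μ] (a b : ℕ)
    (S : Set (Fin a → ℝ)) (T : Set (Fin b → ℝ)) (hS : MeasurableSet S) (hT : MeasurableSet T) :
    (Measure.pi fun _ : Fin a ⊕ Fin b => μ)
      {y : Fin a ⊕ Fin b → ℝ | (fun i => y (.inl i)) ∈ S ∧ (fun i => y (.inr i)) ∈ T}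
      = (Measure.pi fun _ : Fin a => μ) S * (Measure.pi fun _ : Fin b => μ) T := by
  have hmp := measurePreserving_sumPiEquivProdPi (fun _ : Fin a ⊕ Fin b => μ)
  have hset : {y : Fin a ⊕ Fin b → ℝ | (fun i => y (.inl i)) ∈ S ∧ (fun i => y (.inr i)) ∈ T}
      = (MeasurableEquiv.sumPiEquivProdPi (fun _ : Fin a ⊕ Fin b => ℝ)) ⁻¹' (S ×ˢ T) := by
    ext y
    simp [MeasurableEquiv.sumPiEquivProdPi, Equiv.sumPiEquivProdPi]
  rw [hset, hmp.measure_preimage (hS.prod hT).nullMeasurableSet, Measure.prod_prod]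

lemma pi_eq_null {μ : Measure ℝ} [IsProbabilityMeasure μ]
    (hatomless : ∀ x : ℝ, μ {x} = 0) {θ : ℝ} (hθ : θ ≠ 0) {m : ℕ}
    (i j : Fin (m+1)) (hij : i ≠ j) :
    (Measure.pi fun _ : Fin (m+1) => μ) {x | x j = θ * x i} = 0 := by
  obtain ⟨k, hk⟩ := Fin.exists_succAbove_eq hij
  have hmp := measurePreserving_piFinSuccAbove (fun _ : Fin (m+1) => μ) j
  set e := MeasurableEquiv.piFinSuccAbove (fun _ : Fin (m+1) => ℝ) j with he
  have hA : MeasurableSet {p : ℝ × (Fin m → ℝ) | p.1 = θ * p.2 k} :=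
    measurableSet_eq_fun measurable_fst
      (measurable_const.mul ((measurable_pi_apply k).comp measurable_snd))
  have hpre : e ⁻¹' {p : ℝ × (Fin m → ℝ) | p.1 = θ * p.2 k} = {x | x j = θ * x i} := by
    ext x
    simp only [mem_preimage, mem_setOf_eq, he, MeasurableEquiv.piFinSuccAbove]
    rw [← hk]
    rfl
  rw [← hpre, hmp.measure_preimage hA.nullMeasurableSet]
  rw [Measure.prod_apply hA]
  have : ∀ y : ℝ, (Measure.pi fun _ : Fin m => μ)
      (Prod.mk y ⁻¹' {p : ℝ × (Fin m → ℝ) | p.1 = θ * p.2 k}) = 0 := by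
    intro y
    have : Prod.mk y ⁻¹' {p : ℝ × (Fin m → ℝ) | p.1 = θ * p.2 k}
        = (Function.eval k ⁻¹' {y / θ} : Set (Fin m → ℝ)) := by
      ext z
      simp only [mem_preimage, mem_setOf_eq, Function.eval, mem_singleton_iff]
      constructor
      · intro h; field_simp [h]; rw [h]; ring
      · intro h; rw [h]; field_simp
    rw [this]
    exact Measure.pi_eval_preimage_null _ (hatomless _)
  simp only [this, MeasureTheory.lintegral_zero]

lemma qSet_rev {μ : Measure ℝ} [IsProbabilityMeasure μ] {θ : ℝ} (hθ : θ < 0) (c : ℕ) :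
    (Measure.pi fun _ : Fin (c+1) => μ) (qSet θ c)
      = (Measure.pi fun _ : Fin (c+1) => μ) (qSet (1/θ) c) := by
  have key : ∀ a b : ℝ, a ≤ θ * b ↔ b ≤ 1/θ * a := by
    intro a b
    rw [show (1/θ) * a = a / θ by ring, le_div_iff_of_neg hθ, mul_comm]
  have := pi_comp_equiv (μ := μ) (Fin.revPerm : Fin (c+1) ≃ Fin (c+1)) (qSet (1/θ) c)
    (measurableSet_qSet _ _)
  rw [← this]
  congr 1
  ext x
  simp only [mem_preimage, qSet, mem_setOf_eq, Fin.revPerm_apply]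
  constructor
  · intro h i
    rw [Fin.rev_succ, Fin.rev_castSucc]
    exact (key _ _).mp (h i.rev)
  · intro h i
    have := h i.rev
    rw [Fin.rev_succ, Fin.rev_castSucc, Fin.rev_rev] at this
    exact (key _ _).mpr this

lemma measure_U {μ : Measure ℝ} [IsProbabilityMeasure μ] (θ : ℝ) (m c : ℕ) :
    (Measure.pi fun _ : Fin ((m+1+c)+1) => μ) (Cset θ (m+1+c) m ∩ Dset θ (m+1+c) (m+1))
      = (Measure.pi fun _ : Fin (m+1) => μ) (qSet θ m)
        * (Measure.pi fun _ : Fin (c+1) => μ) (pSet θ c) := by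
  have hadd : (m+1) + (c+1) = (m+1+c)+1 := by omega
  set e : Fin (m+1) ⊕ Fin (c+1) ≃ Fin ((m+1+c)+1) :=
    finSumFinEquiv.trans (finCongr hadd) with he
  have eLv : ∀ k : Fin (m+1), (e (.inl k) : Fin ((m+1+c)+1)).val = k.val := by
    intro k; rw [he]
    simp only [Equiv.trans_apply, finCongr_apply, Fin.coe_cast, finSumFinEquiv_apply_left,
      Fin.coe_castAdd]
  have eRv : ∀ k : Fin (c+1), (e (.inr k) : Fin ((m+1+c)+1)).val = m+1+k.val := by
    intro k; rw [he]
    simp only [Equiv.trans_apply, finCongr_apply, Fin.coe_cast, finSumFinEquiv_apply_right,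
      Fin.coe_natAdd]
  set W : Set (Fin (m+1) ⊕ Fin (c+1) → ℝ) :=
    {y | (fun i => y (.inl i)) ∈ qSet θ m ∧ (fun i => y (.inr i)) ∈ pSet θ c} with hW
  have hf1 : Measurable fun y : Fin (m+1) ⊕ Fin (c+1) → ℝ => fun i : Fin (m+1) => y (.inl i) :=
    measurable_pi_lambda _ fun i => measurable_pi_apply _
  have hf2 : Measurable fun y : Fin (m+1) ⊕ Fin (c+1) → ℝ => fun i : Fin (c+1) => y (.inr i) :=
    measurable_pi_lambda _ fun i => measurable_pi_apply _
  have hWmeas : MeasurableSet W := by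
    have hWeq : W = (fun y : Fin (m+1) ⊕ Fin (c+1) → ℝ => fun i : Fin (m+1) => y (.inl i)) ⁻¹'
          qSet θ m
        ∩ (fun y : Fin (m+1) ⊕ Fin (c+1) → ℝ => fun i : Fin (c+1) => y (.inr i)) ⁻¹'
          pSet θ c := rfl
    rw [hWeq]
    exact (hf1 (measurableSet_qSet θ m)).inter (hf2 (measurableSet_pSet θ c))
  have h3 : (fun x : Fin ((m+1+c)+1) → ℝ => fun i => x (e i)) ⁻¹' W
      = Cset θ (m+1+c) m ∩ Dset θ (m+1+c) (m+1) := by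
    ext x
    simp only [mem_preimage, hW, mem_setOf_eq, mem_inter_iff, qSet, pSet, Cset, Dset]
    constructor
    · rintro ⟨h1, h2⟩
      constructor
      · intro i hi
        have key := h1 ⟨i.val, by omega⟩
        have e1 : e (.inl (⟨i.val, by omega⟩ : Fin m).succ) = i.succ := by
          apply Fin.ext; rw [eLv]; simp
        have e2 : e (.inl (⟨i.val, by omega⟩ : Fin m).castSucc) = i.castSucc := by
          apply Fin.ext; rw [eLv]; simp
        rwa [e1, e2] at key
      · intro i hi
        have key := h2 ⟨i.val - (m+1), by omega⟩
        have e1 : e (.inr (⟨i.val - (m+1), by omega⟩ : Fin c).succ) = i.succ := by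
          apply Fin.ext; rw [eRv]; simp; omega
        have e2 : e (.inr (⟨i.val - (m+1), by omega⟩ : Fin c).castSucc) = i.castSucc := by
          apply Fin.ext; rw [eRv]; simp; omega
        rwa [e1, e2] at key
    · rintro ⟨hc, hd⟩
      constructor
      · intro i0
        have key := hc ⟨i0.val, by omega⟩ (by simp)
        have e1 : e (.inl i0.succ) = (⟨i0.val, by omega⟩ : Fin (m+1+c)).succ := by
          apply Fin.ext; rw [eLv]; simp
        have e2 : e (.inl i0.castSucc) = (⟨i0.val, by omega⟩ : Fin (m+1+c)).castSucc := by
          apply Fin.ext; rw [eLv]; simp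
        rwa [e1, e2]
      · intro i0
        have key := hd ⟨m+1+i0.val, by omega⟩ (by simp)
        have e1 : e (.inr i0.succ) = (⟨m+1+i0.val, by omega⟩ : Fin (m+1+c)).succ := by
          apply Fin.ext; rw [eRv]; simp; omega
        have e2 : e (.inr i0.castSucc) = (⟨m+1+i0.val, by omega⟩ : Fin (m+1+c)).castSucc := by
          apply Fin.ext; rw [eRv]; simp
        rwa [e1, e2]
  rw [← h3, pi_comp_equiv e W hWmeas,
    pi_split _ _ _ _ (measurableSet_qSet θ m) (measurableSet_pSet θ c)]

/-! ### Set identities -/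

lemma CD_zero (θ : ℝ) (N : ℕ) : Cset θ N 0 ∩ Dset θ N 0 = pSet θ N := by
  ext x; simp [Cset, Dset, pSet]

lemma CD_top (θ : ℝ) (N : ℕ) : Cset θ N N ∩ Dset θ N N = qSet θ N := by
  ext x
  simp only [Cset, Dset, qSet, mem_inter_iff, mem_setOf_eq]
  constructor
  · rintro ⟨hc, _⟩ i; exact hc i i.isLt
  · intro h
    exact ⟨fun i _ => h i, fun i hi => absurd hi (by omega)⟩

lemma CD_union (θ : ℝ) (N j : ℕ) (hj : j < N) :
    (Cset θ N j ∩ Dset θ N j) ∪ (Cset θ N (j+1) ∩ Dset θ N (j+1))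
      = Cset θ N j ∩ Dset θ N (j+1) := by
  ext x
  simp only [Cset, Dset, mem_union, mem_inter_iff, mem_setOf_eq]
  constructor
  · rintro (⟨hc, hd⟩ | ⟨hc, hd⟩)
    · exact ⟨hc, fun i hi => hd i (by omega)⟩
    · exact ⟨fun i hi => hc i (by omega), hd⟩
  · rintro ⟨hc, hd⟩
    rcases le_total (x (⟨j, hj⟩ : Fin N).succ) (θ * x (⟨j, hj⟩ : Fin N).castSucc) with h | h
    · right
      refine ⟨fun i hi => ?_, hd⟩
      rcases Nat.lt_or_ge (i : ℕ) j with h' | h'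
      · exact hc i h'
      · have : i = (⟨j, hj⟩ : Fin N) := Fin.ext (show (i:ℕ) = j by omega)
        rw [this]; exact h
    · left
      refine ⟨hc, fun i hi => ?_⟩
      rcases Nat.lt_or_ge (i : ℕ) (j+1) with h' | h'
      · have : i = (⟨j, hj⟩ : Fin N) := Fin.ext (show (i:ℕ) = j by omega)
        rw [this]; exact h
      · exact hd i h'

lemma CD_inter (θ : ℝ) (N j : ℕ) (hj : j < N) :
    (Cset θ N j ∩ Dset θ N j) ∩ (Cset θ N (j+1) ∩ Dset θ N (j+1))
      ⊆ {x : Fin (N+1) → ℝ | x (⟨j, hj⟩ : Fin N).succ = θ * x (⟨j, hj⟩ : Fin N).castSucc} := by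
  rintro x ⟨⟨_, hd⟩, ⟨hc, _⟩⟩
  exact le_antisymm (hc ⟨j, hj⟩ (show j < j+1 by omega)) (hd ⟨j, hj⟩ (show j ≤ j by omega))

/-! ### Telescoping identity -/

lemma telescope (t u : ℕ → ℝ) : ∀ N : ℕ, (∀ k, 1 ≤ k → k ≤ N → t (k-1) = u k - t k) →
    t 0 = (∑ k ∈ Finset.Icc 1 N, (-1:ℝ)^(k-1) * u k) + (-1)^N * t N := by
  intro N
  induction N with
  | zero => intro _; simp
  | succ N ih =>
    intro h
    rw [Finset.sum_Icc_succ_top (by omega : 1 ≤ N + 1)]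
    have hN := ih (fun k h1 h2 => h k h1 (by omega))
    have hlast : t N = u (N+1) - t (N+1) := h (N+1) (by omega) le_rfl
    rw [hN, hlast]
    simp only [Nat.add_sub_cancel]
    ring

/-! ### Main theorem -/

theorem duality_general_negative (μ : Measure ℝ) [IsProbabilityMeasure μ]
    (hatomless : ∀ x : ℝ, μ {x} = 0) (θ : ℝ) (hθ : θ < 0) :
    ∀ n : ℕ,
      genPers μ θ n =
        (∑ k ∈ Finset.Icc 1 n,
            (-1 : ℝ) ^ (k - 1) * genPers μ θ (n - k) * genPersQ μ (1 / θ) (k - 1)) +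
          (-1) ^ n * genPersQ μ (1 / θ) n := by
  intro N
  have hθ0 : θ ≠ 0 := ne_of_lt hθ
  have hstep : ∀ k, 1 ≤ k → k ≤ N →
      ((Measure.pi fun _ : Fin (N+1) => μ) (Cset θ N (k-1) ∩ Dset θ N (k-1))).toReal
        = genPers μ θ (N-k) * genPersQ μ (1/θ) (k-1)
          - ((Measure.pi fun _ : Fin (N+1) => μ) (Cset θ N k ∩ Dset θ N k)).toReal := by
    intro k hk1 hk2
    obtain ⟨m, rfl⟩ : ∃ m, k = m+1 := ⟨k-1, by omega⟩
    obtain ⟨c, rfl⟩ : ∃ c, N = m+1+c := ⟨N-(m+1), by omega⟩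
    simp only [Nat.add_sub_cancel, show m+1+c-(m+1) = c by omega]
    have hnull : (Measure.pi fun _ : Fin ((m+1+c)+1) => μ)
        {x : Fin ((m+1+c)+1) → ℝ |
          x (⟨m, by omega⟩ : Fin (m+1+c)).succ = θ * x (⟨m, by omega⟩ : Fin (m+1+c)).castSucc}
          = 0 :=
      pi_eq_null hatomless hθ0 _ _
        (by simp only [ne_eq, Fin.ext_iff, Fin.coe_castSucc, Fin.val_succ]; omega)
    have hiz : (Measure.pi fun _ : Fin ((m+1+c)+1) => μ)
        ((Cset θ (m+1+c) m ∩ Dset θ (m+1+c) m)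
          ∩ (Cset θ (m+1+c) (m+1) ∩ Dset θ (m+1+c) (m+1))) = 0 :=
      measure_mono_null (CD_inter θ (m+1+c) m (by omega)) hnull
    have hadd : (Measure.pi fun _ : Fin ((m+1+c)+1) => μ) (Cset θ (m+1+c) m ∩ Dset θ (m+1+c) m)
          + (Measure.pi fun _ : Fin ((m+1+c)+1) => μ)
              (Cset θ (m+1+c) (m+1) ∩ Dset θ (m+1+c) (m+1))
        = (Measure.pi fun _ : Fin ((m+1+c)+1) => μ)
            (Cset θ (m+1+c) m ∩ Dset θ (m+1+c) (m+1)) := by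
      rw [← measure_union_add_inter _
        ((measurableSet_Cset θ (m+1+c) (m+1)).inter (measurableSet_Dset θ (m+1+c) (m+1))),
        hiz, add_zero, CD_union θ (m+1+c) m (by omega)]
    have h1 : ((Measure.pi fun _ : Fin ((m+1+c)+1) => μ)
            (Cset θ (m+1+c) m ∩ Dset θ (m+1+c) m)).toReal
          + ((Measure.pi fun _ : Fin ((m+1+c)+1) => μ)
            (Cset θ (m+1+c) (m+1) ∩ Dset θ (m+1+c) (m+1))).toReal
        = genPers μ θ c * genPersQ μ (1/θ) m := by
      rw [← ENNReal.toReal_add (measure_ne_top _ _) (measure_ne_top _ _), hadd,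
        measure_U θ m c, qSet_rev hθ m, ENNReal.toReal_mul,
        genPers_eq μ θ c, genPersQ_eq μ (1/θ) m, mul_comm]
    linarith
  have hmain := telescope
    (fun j => ((Measure.pi fun _ : Fin (N+1) => μ) (Cset θ N j ∩ Dset θ N j)).toReal)
    (fun k => genPers μ θ (N-k) * genPersQ μ (1/θ) (k-1)) N hstep
  have h0 : ((Measure.pi fun _ : Fin (N+1) => μ) (Cset θ N 0 ∩ Dset θ N 0)).toReal
      = genPers μ θ N := by
    rw [CD_zero]; exact (genPers_eq μ θ N).symm
  have hN : ((Measure.pi fun _ : Fin (N+1) => μ) (Cset θ N N ∩ Dset θ N N)).toReal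
      = genPersQ μ (1/θ) N := by
    rw [CD_top, qSet_rev hθ N]; exact (genPersQ_eq μ (1/θ) N).symm
  rw [h0, hN] at hmain
  rw [hmain]
  congr 1
  apply Finset.sum_congr rfl
  intro k _
  ring
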